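/- If H : ℝⁿ → ℝ satisfies the control barrier function inequality sup_{u ∈ U} D⁺H(x; u) ≥ −α(H(x)) for all x with H(x) ≥ 0, for some class-K function α, then for any δ' ∈ [0, δ) with the additional property that sup_{u ∈ U} D⁺H(x; u) ≥ 0 whenever H(x) ≤ δ, the shifted function H^{δ'}(x) := H(x) − δ' also satisfies sup_{u ∈ U} D⁺H^{δ'}(x; u) ≥ −α'(H^{δ'}(x)) for all x with H^{δ'}(x) ≥ 0, for some class-K function α'. -/
import Mathlib


/-- if `H` satisfies the CBF inequality with class-K `α`, and additionally
`sup_u D⁺H(x;u) ≥ 0` whenever `H x ≤ δ` (and `≥ -L·M` above `δ`), then the shifted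
function `H - δ'` is also a CBF for any `δ' ∈ [0, δ)`. Here `DH x u` denotes the
lower right Dini derivative of `H` along the trajectory from `x` with input `u`,
and the sup over `u` is modeled by existential quantification. -/
theorem stmt_9 {n : ℕ} {U : Type*} (H : EuclideanSpace ℝ (Fin n) → ℝ)
    (DH : EuclideanSpace ℝ (Fin n) → U → ℝ)
    (δ δ' L M : ℝ) (hδ : 0 < δ) (hδ'0 : 0 ≤ δ') (hδ' : δ' < δ)
    (hL : 0 < L) (hM : 0 < M)
    (α : ℝ → ℝ) (hαc : ContinuousOn α (Set.Ici 0))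
    (hαm : StrictMonoOn α (Set.Ici 0)) (hα0 : α 0 = 0)
    (hcbf : ∀ x, 0 ≤ H x → ∃ u, -α (H x) ≤ DH x u)
    (hlow : ∀ x, 0 ≤ H x → H x ≤ δ → ∃ u, 0 ≤ DH x u)
    (hhigh : ∀ x, δ < H x → ∃ u, -(L * M) ≤ DH x u) :
    ∃ α' : ℝ → ℝ, ContinuousOn α' (Set.Ici 0) ∧ StrictMonoOn α' (Set.Ici 0) ∧
      α' 0 = 0 ∧
      ∀ x, 0 ≤ H x - δ' → ∃ u, -α' (H x - δ') ≤ DH x u := by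
  have hd : 0 < δ - δ' := by linarith
  have hc : 0 < L * M / (δ - δ') := div_pos (mul_pos hL hM) hd
  refine ⟨fun s => (L * M / (δ - δ')) * s, ?_, ?_, by ring, ?_⟩
  · exact (continuous_const.mul continuous_id).continuousOn
  · intro a _ b _ hab
    exact mul_lt_mul_of_pos_left hab hc
  · intro x hx
    by_cases h : H x ≤ δ
    · obtain ⟨u, hu⟩ := hlow x (by linarith) h
      refine ⟨u, le_trans ?_ hu⟩
      have : 0 ≤ L * M / (δ - δ') * (H x - δ') := mul_nonneg hc.le hx
      linarith
    · obtain ⟨u, hu⟩ := hhigh x (by linarith)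
      refine ⟨u, le_trans ?_ hu⟩
      have h1 : δ - δ' ≤ H x - δ' := by linarith
      have h2 : L * M / (δ - δ') * (δ - δ') ≤ L * M / (δ - δ') * (H x - δ') :=
        mul_le_mul_of_nonneg_left h1 hc.le
      rw [div_mul_cancel₀ _ hd.ne'] at h2
      linarith
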